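/- arXiv:2505.02682 — 2 statements merged into one kernel-verified Lean document; each statement's English description precedes it below -/
import Mathlib

section
/- Let f be an unbounded modulus function. Then the union over all weight functions g ∈ G of the modular simple density ideals Z_g(f) equals Z_ℓ(f) = {C ⊆ ℕ : liminf_{k→∞} f(|C ∩ [0,k-1]|)/f(k) = 0}. -/
open Filter Topology

/-- `cnt C k` is the number of elements of `C` in `[0, k-1]`. -/
noncomputable def cnt (C : Set ℕ) (k : ℕ) : ℕ := (C ∩ Set.Iio k).ncard

/-- A modulus function `f : [0,∞) → [0,∞)`: nonnegative, increasing, subadditive,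
vanishing exactly at `0`, and right continuous at `0`. -/
def IsModulus (f : ℝ → ℝ) : Prop :=
  (∀ x, 0 ≤ x → 0 ≤ f x) ∧ MonotoneOn f (Set.Ici 0) ∧
  (∀ x y, 0 ≤ x → 0 ≤ y → f (x + y) ≤ f x + f y) ∧
  (∀ x, 0 ≤ x → (f x = 0 ↔ x = 0)) ∧ ContinuousWithinAt f (Set.Ici 0) 0

/-- `f` is unbounded on `[0,∞)`. -/
def IsUnboundedMod (f : ℝ → ℝ) : Prop := ∀ M : ℝ, ∃ x : ℝ, 0 ≤ x ∧ M < f x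

/-- The family `G` of weight functions: `g : ℕ → [0,∞)` with `g(k) → ∞` and
`k / g(k)` not converging to `0`. -/
def InG (g : ℕ → ℝ) : Prop :=
  (∀ k, 0 ≤ g k) ∧ Tendsto g atTop atTop ∧
  ¬ Tendsto (fun k : ℕ => (k : ℝ) / g k) atTop (nhds 0)

/-- The modular simple density ideal `Z_g(f)`. -/
def Zgf (f : ℝ → ℝ) (g : ℕ → ℝ) : Set (Set ℕ) :=
  {C | Tendsto (fun k => f (cnt C k) / f (g k)) atTop (nhds 0)}

/- ### Auxiliary lemmas -/

lemma mod_zero {f : ℝ → ℝ} (hf : IsModulus f) : f 0 = 0 :=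
  (hf.2.2.2.1 0 le_rfl).mpr rfl

lemma mod_pos {f : ℝ → ℝ} (hf : IsModulus f) {x : ℝ} (hx : 0 < x) : 0 < f x := by
  rcases lt_or_eq_of_le (hf.1 x hx.le) with h | h
  · exact h
  · exact absurd (((hf.2.2.2.1 x hx.le).mp h.symm)) hx.ne'

lemma mod_mono {f : ℝ → ℝ} (hf : IsModulus f) {x y : ℝ} (hx : 0 ≤ x) (hxy : x ≤ y) :
    f x ≤ f y := hf.2.1 (Set.mem_Ici.mpr hx) (Set.mem_Ici.mpr (hx.trans hxy)) hxy

lemma mod_nat_mul {f : ℝ → ℝ} (hf : IsModulus f) (m : ℕ) {x : ℝ} (hx : 0 ≤ x) :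
    f ((m : ℝ) * x) ≤ (m : ℝ) * f x := by
  induction m with
  | zero => simp [mod_zero hf]
  | succ n ih =>
      have h1 : ((n : ℝ) + 1) * x = (n : ℝ) * x + x := by ring
      have h2 := hf.2.2.1 ((n : ℝ) * x) x (by positivity) hx
      push_cast
      rw [h1]
      calc f ((n : ℝ) * x + x) ≤ f ((n : ℝ) * x) + f x := h2
        _ ≤ (n : ℝ) * f x + f x := by linarith
        _ = ((n : ℝ) + 1) * f x := by ring

lemma cnt_mono (C : Set ℕ) : Monotone (cnt C) := by
  intro a b hab
  exact Set.ncard_le_ncard (Set.inter_subset_inter_right _ (Set.Iio_subset_Iio hab))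
    ((Set.finite_Iio b).subset Set.inter_subset_right)

lemma cnt_le (C : Set ℕ) (k : ℕ) : cnt C k ≤ k := by
  have h1 : cnt C k ≤ (Set.Iio k).ncard :=
    Set.ncard_le_ncard Set.inter_subset_right (Set.finite_Iio k)
  have h2 : (Set.Iio k).ncard = k := by
    simp [Set.ncard_eq_toFinset_card', Set.toFinset_Iio]
  omega

/-- The family `Z_ℓ(f) = {C ⊆ ℕ : liminf f(|C ∩ [0,k-1]|)/f(k) = 0}`. -/
theorem stmt1 (f : ℝ → ℝ) (hf : IsModulus f) (hfu : IsUnboundedMod f) :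
    {C : Set ℕ | ∃ g : ℕ → ℝ, InG g ∧ C ∈ Zgf f g} =
      {C : Set ℕ | Filter.liminf (fun k : ℕ => f (cnt C k) / f (k : ℝ)) Filter.atTop = 0} := by
  ext C
  set r : ℕ → ℝ := fun k : ℕ => f (cnt C k) / f (k : ℝ) with hr
  have hrnonneg : ∀ k, 0 ≤ r k := fun k =>
    div_nonneg (hf.1 _ (Nat.cast_nonneg _)) (hf.1 _ (Nat.cast_nonneg _))
  have hrle1 : ∀ k, r k ≤ 1 := by
    intro k
    rcases Nat.eq_zero_or_pos k with hk | hk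
    · subst hk
      simp [r, cnt, mod_zero hf]
    · have hfk : 0 < f (k : ℝ) := mod_pos hf (by exact_mod_cast hk)
      have : f ((cnt C k : ℕ) : ℝ) ≤ f (k : ℝ) :=
        mod_mono hf (Nat.cast_nonneg _) (by exact_mod_cast cnt_le C k)
      exact div_le_one_of_le₀ this hfk.le
  have hbdd : IsBoundedUnder (· ≥ ·) atTop r :=
    isBoundedUnder_of ⟨0, fun k => hrnonneg k⟩
  have hcobdd : IsCoboundedUnder (· ≥ ·) atTop r :=
    (isBoundedUnder_of ⟨1, fun k => hrle1 k⟩ :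
      IsBoundedUnder (· ≤ ·) atTop r).isCoboundedUnder_ge
  have hliminf_nonneg : 0 ≤ liminf r atTop :=
    le_liminf_of_le hcobdd (Eventually.of_forall hrnonneg)
  constructor
  · -- forward direction
    rintro ⟨g, ⟨hg0, hgtop, hgdiv⟩, hC⟩
    have : liminf r atTop ≤ 0 := by
      apply le_of_forall_pos_le_add
      intro ε hε
      rw [zero_add]
      -- from ¬ tendsto, get δ > 0 with frequently δ ≤ |k / g k|
      rw [Metric.tendsto_atTop] at hgdiv
      push_neg at hgdiv
      obtain ⟨δ, hδpos, hδ⟩ := hgdiv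
      obtain ⟨m, hm⟩ := exists_nat_ge (1 / δ)
      have hmpos : 0 < m := by
        have h0 : (0:ℝ) < 1/δ := by positivity
        exact_mod_cast lt_of_lt_of_le h0 hm
      have hm1 : (1 : ℝ) ≤ m := by exact_mod_cast hmpos
      -- eventually g k ≥ 1 and m * ratio_g k < ε
      have hgev : ∀ᶠ k in atTop, (1 : ℝ) ≤ g k := hgtop.eventually_ge_atTop 1
      have hmε : ∀ᶠ k in atTop, (m : ℝ) * (f (cnt C k) / f (g k)) < ε := by
        have : Tendsto (fun k => (m : ℝ) * (f (cnt C k) / f (g k))) atTop (nhds 0) := by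
          simpa using hC.const_mul (m : ℝ)
        exact (this.eventually (eventually_lt_nhds hε)).mono (by simp)
      have hkev : ∀ᶠ k : ℕ in atTop, (1 : ℝ) ≤ (k : ℝ) :=
        eventually_atTop.mpr ⟨1, fun k hk => by exact_mod_cast hk⟩
      have hfreq : ∃ᶠ k : ℕ in atTop, δ ≤ |(k : ℝ) / g k| :=
        frequently_atTop.mpr fun N => by
          obtain ⟨n, hn1, hn2⟩ := hδ N
          exact ⟨n, hn1, by rwa [Real.dist_eq, sub_zero] at hn2⟩
      have hfreq2 : ∃ᶠ k in atTop, r k ≤ ε := by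
        refine ((hfreq.and_eventually ((hgev.and hmε).and hkev)).mono ?_)
        rintro k ⟨hdist, ⟨hg1, hmk⟩, hk1⟩
        have hgkpos : 0 < g k := lt_of_lt_of_le one_pos hg1
        have hkpos : (0 : ℝ) < k := lt_of_lt_of_le one_pos hk1
        have habs : δ ≤ (k : ℝ) / g k := by
          rwa [abs_of_nonneg (div_nonneg hkpos.le hgkpos.le)] at hdist
        -- g k ≤ k / δ ≤ m * k
        have hgk_le : g k ≤ (m : ℝ) * k := by
          have h1 : g k ≤ (k : ℝ) / δ := by
            rw [le_div_iff₀ hδpos]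
            have h2 := (le_div_iff₀ hgkpos).mp habs
            nlinarith
          calc g k ≤ (k : ℝ) / δ := h1
            _ = (k : ℝ) * (1 / δ) := by ring
            _ ≤ (k : ℝ) * m := by
                apply mul_le_mul_of_nonneg_left hm hkpos.le
            _ = (m : ℝ) * k := mul_comm _ _
        have hfgk : f (g k) ≤ (m : ℝ) * f (k : ℝ) :=
          le_trans (mod_mono hf hgkpos.le hgk_le) (mod_nat_mul hf m hkpos.le)
        have hfgkpos : 0 < f (g k) := mod_pos hf hgkpos
        have hfkpos : 0 < f (k : ℝ) := mod_pos hf hkpos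
        have hcnt : 0 ≤ f ((cnt C k : ℕ) : ℝ) := hf.1 _ (Nat.cast_nonneg _)
        have key : f ((cnt C k : ℕ) : ℝ) / f (k : ℝ) ≤
            (m : ℝ) * (f ((cnt C k : ℕ) : ℝ) / f (g k)) := by
          rw [mul_div_assoc', div_le_div_iff₀ hfkpos hfgkpos]
          nlinarith
        exact le_trans key hmk.le
      exact liminf_le_of_frequently_le hfreq2 hbdd
    exact le_antisymm this hliminf_nonneg
  · -- backward direction
    intro hC
    simp only [Set.mem_setOf_eq] at hC ⊢
    -- extract a sequence
    have key : ∀ j N : ℕ, ∃ m : ℕ, N < m ∧ r m < 1 / ((j : ℝ) + 1) := by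
      intro j N
      have hlt : liminf r atTop < 1 / ((j : ℝ) + 1) := by
        rw [hC]; positivity
      have hfreq := frequently_lt_of_liminf_lt hcobdd hlt
      obtain ⟨n, hn1, hn2⟩ := frequently_atTop.mp hfreq (N + 1)
      exact ⟨n, by omega, hn2⟩
    choose F hF1 hF2 using key
    set s : ℕ → ℕ := fun j => Nat.rec (F 0 0) (fun j prev => F (j + 1) prev) j with hs
    have hs0 : 0 < s 0 := hF1 0 0
    have hssucc : ∀ j, s j < s (j + 1) := fun j => hF1 (j + 1) (s j)
    have hsr : ∀ j, r (s j) < 1 / ((j : ℝ) + 1) := by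
      intro j
      cases j with
      | zero => exact hF2 0 0
      | succ n => exact hF2 (n + 1) (s n)
    have hsmono : StrictMono s := strictMono_nat_of_lt_succ hssucc
    have hsge : ∀ j, j + 1 ≤ s j := by
      intro j
      induction j with
      | zero => omega
      | succ n ih => have := hssucc n; omega
    -- define J k = least j with k < s j, g k = s (J k)
    have hex : ∀ k : ℕ, ∃ j, k < s j := fun k => ⟨k, by have := hsge k; omega⟩
    set J : ℕ → ℕ := fun k => Nat.find (hex k) with hJ
    have hJspec : ∀ k, k < s (J k) := fun k => Nat.find_spec (hex k)
    have hJmin : ∀ k j, j < J k → s j ≤ k := by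
      intro k j hj
      have := Nat.find_min (hex k) hj
      omega
    set g : ℕ → ℝ := fun k => ((s (J k) : ℕ) : ℝ) with hg
    have hgk : ∀ k : ℕ, (k : ℝ) < g k := fun k => by
      show (k : ℝ) < ((s (J k) : ℕ) : ℝ)
      exact_mod_cast hJspec k
    have hJtop : Tendsto J atTop atTop := by
      rw [tendsto_atTop]
      intro M
      filter_upwards [eventually_ge_atTop (s M)] with k hk
      by_contra h
      push_neg at h
      have : s (J k) ≤ s M := hsmono.monotone (by omega)
      have := hJspec k
      omega
    refine ⟨g, ⟨fun k => Nat.cast_nonneg _, ?_, ?_⟩, ?_⟩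
    · -- tendsto g atTop atTop
      apply tendsto_atTop_mono (fun k => (hgk k).le)
      exact tendsto_natCast_atTop_atTop
    · -- k / g k does not tend to 0
      intro habs
      have hev := (habs.eventually (eventually_lt_nhds (show (0:ℝ) < 1/2 by norm_num)))
      rw [eventually_atTop] at hev
      obtain ⟨N, hN⟩ := hev
      -- take j with s j - 1 ≥ N, and evaluate at k = s j - 1
      obtain ⟨j, hj⟩ : ∃ j, N + 2 ≤ s j := ⟨N + 2, by have := hsge (N+2); omega⟩
      set k := s j - 1 with hk
      have hks : k + 1 = s j := by omega
      have hJk : J k = j := by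
        have h1 : k < s j := by omega
        have h2 : ∀ i < j, ¬ (k < s i) := by
          intro i hi
          have : s i ≤ s (j - 1) := hsmono.monotone (by omega)
          have h3 : s (j-1) < s j := by
            have := hsmono (show j - 1 < j by omega)
            omega
          omega
        show Nat.find (hex k) = j
        rw [Nat.find_eq_iff]
        exact ⟨h1, h2⟩
      have hgkval : g k = ((s j : ℕ) : ℝ) := by rw [hg]; simp only; rw [hJk]
      have hkN : N ≤ k := by omega
      have := hN k hkN
      rw [hgkval] at this
      have hsj2 : 2 ≤ s j := by omega
      have hhalf : (1:ℝ)/2 ≤ (k : ℝ) / ((s j : ℕ) : ℝ) := by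
        rw [le_div_iff₀ (by exact_mod_cast (show (0:ℕ) < s j by omega))]
        have hkval : (k : ℝ) = (s j : ℝ) - 1 := by
          have : (k : ℕ) + 1 = s j := hks
          push_cast [← this]
          ring
        rw [hkval]
        have : (2:ℝ) ≤ (s j : ℝ) := by exact_mod_cast hsj2
        linarith
      linarith
    · -- C ∈ Zgf f g
      rw [Zgf, Set.mem_setOf_eq]
      have hub : ∀ k, f ((cnt C k : ℕ) : ℝ) / f (g k) ≤ 1 / ((J k : ℝ) + 1) := by
        intro k
        have hgkval : g k = ((s (J k) : ℕ) : ℝ) := rfl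
        have hsJpos : (0:ℝ) < ((s (J k) : ℕ) : ℝ) := by
          exact_mod_cast (show 0 < s (J k) by have := hsge (J k); omega)
        have hfpos : 0 < f ((s (J k) : ℕ) : ℝ) := mod_pos hf hsJpos
        have hcle : cnt C k ≤ cnt C (s (J k)) := cnt_mono C (hJspec k).le
        have h1 : f ((cnt C k : ℕ) : ℝ) ≤ f ((cnt C (s (J k)) : ℕ) : ℝ) :=
          mod_mono hf (Nat.cast_nonneg _) (by exact_mod_cast hcle)
        calc f ((cnt C k : ℕ) : ℝ) / f (g k)
            = f ((cnt C k : ℕ) : ℝ) / f ((s (J k) : ℕ) : ℝ) := by rw [hgkval]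
          _ ≤ f ((cnt C (s (J k)) : ℕ) : ℝ) / f ((s (J k) : ℕ) : ℝ) := by
              gcongr
          _ = r (s (J k)) := rfl
          _ ≤ 1 / ((J k : ℝ) + 1) := (hsr (J k)).le
      have hlb : ∀ k, 0 ≤ f ((cnt C k : ℕ) : ℝ) / f (g k) :=
        fun k => div_nonneg (hf.1 _ (Nat.cast_nonneg _)) (hf.1 _ (Nat.cast_nonneg _))
      have htend : Tendsto (fun k => 1 / ((J k : ℝ) + 1)) atTop (nhds 0) :=
        tendsto_one_div_add_atTop_nhds_zero_nat.comp hJtop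
      exact squeeze_zero hlb hub htend
end

section
/- Let g ∈ H↑ (a nondecreasing ℕ-valued weight function) and let f be an unbounded modulus function. If the quotient set S_f(g) has exactly one element, then there exist M > 0 and ε > 0 such that f(g(k + ⌊ε·f(g(k))⌋))/f(g(k)) ≤ M for all but finitely many k ∈ ℕ. -/
open Filter Topology

/-- `H↑`: nondecreasing `ℕ`-valued weight functions, i.e. monotone `g : ℕ → ℕ`
with `g(k) → ∞` and `k / g(k)` not converging to `0`. -/
def InHup (g : ℕ → ℕ) : Prop :=
  Monotone g ∧ Tendsto g atTop atTop ∧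
  ¬ Tendsto (fun k : ℕ => (k : ℝ) / (g k : ℝ)) atTop (nhds 0)

/-- The modular simple density ideal `Z_g(f)` for a `ℕ`-valued weight function. -/
def ZgfN (f : ℝ → ℝ) (g : ℕ → ℕ) : Set (Set ℕ) :=
  {C | Tendsto (fun k => f (cnt C k) / f (g k : ℝ)) atTop (nhds 0)}

/-- The carrier of `S_f(g)`: those `h ∈ H↑` with `Z_g(f) = Z_h(f)`. -/
def SfgCarrier (f : ℝ → ℝ) (g : ℕ → ℕ) : Type :=
  {h : ℕ → ℕ // InHup h ∧ ZgfN f g = ZgfN f h}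

/-- The equivalence relation `R`: `h R h'` iff `limsup f(h(k))/f(h'(k)) < ∞` and
`limsup f(h'(k))/f(h(k)) < ∞` (i.e. both ratio sequences are eventually bounded above). -/
def Rrel (f : ℝ → ℝ) (g : ℕ → ℕ) (h h' : SfgCarrier f g) : Prop :=
  IsBoundedUnder (· ≤ ·) atTop (fun k => f (h.1 k : ℝ) / f (h'.1 k : ℝ)) ∧
  IsBoundedUnder (· ≤ ·) atTop (fun k => f (h'.1 k : ℝ) / f (h.1 k : ℝ))

section ModAux
variable {f : ℝ → ℝ}

lemma fnonneg (hf : IsModulus f) {x : ℝ} (hx : 0 ≤ x) : 0 ≤ f x := hf.1 x hx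

lemma fmono (hf : IsModulus f) {x y : ℝ} (hx : 0 ≤ x) (hxy : x ≤ y) : f x ≤ f y :=
  hf.2.1 (Set.mem_Ici.2 hx) (Set.mem_Ici.2 (hx.trans hxy)) hxy

lemma fzero (hf : IsModulus f) : f 0 = 0 := (hf.2.2.2.1 0 le_rfl).2 rfl

lemma fpos (hf : IsModulus f) {x : ℝ} (hx : 0 < x) : 0 < f x := by
  rcases lt_or_eq_of_le (fnonneg hf hx.le) with h | h
  · exact h
  · exact absurd (((hf.2.2.2.1 x hx.le).1 h.symm)) hx.ne'

lemma fnat (hf : IsModulus f) (m : ℕ) : f m ≤ m * f 1 := by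
  induction m with
  | zero => simp [fzero hf]
  | succ n ih =>
    have := hf.2.2.1 n 1 (by positivity) zero_le_one
    push_cast
    push_cast at this
    nlinarith

lemma ftop (hf : IsModulus f) (hfu : IsUnboundedMod f) : Tendsto f atTop atTop := by
  rw [tendsto_atTop_atTop]
  intro b
  obtain ⟨x, hx0, hbx⟩ := hfu b
  exact ⟨x, fun a ha => hbx.le.trans (fmono hf hx0 ha)⟩

end ModAux

section CntAux

lemma cnt_fin (C : Set ℕ) (i : ℕ) : (C ∩ Set.Iio i).Finite := (Set.finite_Iio i).inter_of_right C

lemma cnt_le_add (C : Set ℕ) (m i : ℕ) : cnt C i ≤ cnt C m + (i - m) := by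
  have hsub : C ∩ Set.Iio i ⊆ (C ∩ Set.Iio m) ∪ Set.Ico m i := by
    intro x ⟨hxC, hxi⟩
    by_cases hxm : x < m
    · exact Or.inl ⟨hxC, hxm⟩
    · exact Or.inr ⟨not_lt.1 hxm, hxi⟩
  calc cnt C i ≤ ((C ∩ Set.Iio m) ∪ Set.Ico m i).ncard :=
        Set.ncard_le_ncard hsub (((cnt_fin C m).union (Set.finite_Ico m i)))
    _ ≤ (C ∩ Set.Iio m).ncard + (Set.Ico m i).ncard := Set.ncard_union_le _ _
    _ = cnt C m + (i - m) := by
        rw [cnt]; congr 1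
        rw [Set.ncard_eq_toFinset_card']; simp

end CntAux

section HFun

def inI (k L : ℕ → ℕ) (n i : ℕ) : Prop := k n ≤ i ∧ i ≤ k n + L n

open Classical in
noncomputable def hFun (g k L : ℕ → ℕ) (i : ℕ) : ℕ :=
  if hx : ∃ n, inI k L n i then g (k (Nat.find hx)) else g i

variable {g k L : ℕ → ℕ}

lemma kSM (hsep : ∀ n, k n + L n < k (n + 1)) : StrictMono k :=
  strictMono_nat_of_lt_succ fun n => lt_of_le_of_lt (Nat.le_add_right _ _) (hsep n)

lemma inI_uniq (hsep : ∀ n, k n + L n < k (n + 1)) {n m i : ℕ}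
    (hn : inI k L n i) (hm : inI k L m i) : n = m := by
  obtain ⟨hn1, hn2⟩ := hn
  obtain ⟨hm1, hm2⟩ := hm
  rcases lt_trichotomy n m with h | h | h
  · have h1 : k (n + 1) ≤ k m := (kSM hsep).monotone h
    have h2 := hsep n
    omega
  · exact h
  · have h1 : k (m + 1) ≤ k n := (kSM hsep).monotone h
    have h2 := hsep m
    omega

lemma hFun_mem (hsep : ∀ n, k n + L n < k (n + 1)) {n i : ℕ}
    (hn : inI k L n i) : hFun g k L i = g (k n) := by
  classical
  rw [hFun]
  rw [dif_pos ⟨n, hn⟩]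
  congr 2
  exact inI_uniq hsep (Nat.find_spec (⟨n, hn⟩ : ∃ m, inI k L m i)) hn

lemma hFun_notmem {i : ℕ} (hi : ¬ ∃ n, inI k L n i) : hFun g k L i = g i := by
  rw [hFun, dif_neg hi]

lemma hFun_le (hsep : ∀ n, k n + L n < k (n + 1)) (hgm : Monotone g) (i : ℕ) :
    hFun g k L i ≤ g i := by
  by_cases hx : ∃ n, inI k L n i
  · obtain ⟨n, hn⟩ := hx
    rw [hFun_mem hsep hn]
    exact hgm hn.1
  · rw [hFun_notmem hx]

lemma hFun_mono (hsep : ∀ n, k n + L n < k (n + 1)) (hgm : Monotone g) :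
    Monotone (hFun g k L) := by
  apply monotone_nat_of_le_succ
  intro i
  by_cases h1 : ∃ n, inI k L n i
  · obtain ⟨n, hn⟩ := h1
    rw [hFun_mem hsep hn]
    by_cases h2 : ∃ m, inI k L m (i + 1)
    · obtain ⟨m, hm⟩ := h2
      rw [hFun_mem hsep hm]
      apply hgm
      apply (kSM hsep).monotone
      by_contra hlt
      push_neg at hlt
      have h1 : k (m + 1) ≤ k n := (kSM hsep).monotone hlt
      have h2 := hsep m
      obtain ⟨hn1, hn2⟩ := hn
      obtain ⟨hm1, hm2⟩ := hm
      omega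
    · rw [hFun_notmem h2]
      exact hgm (hn.1.trans (Nat.le_succ i))
  · rw [hFun_notmem h1]
    by_cases h2 : ∃ m, inI k L m (i + 1)
    · obtain ⟨m, hm⟩ := h2
      rw [hFun_mem hsep hm]
      apply hgm
      by_contra hlt
      push_neg at hlt
      exact h1 ⟨m, le_of_lt hlt, hm.2.trans' (Nat.le_succ i) |>.trans' (Nat.le_refl _) |>.trans (le_refl _) |>.trans (le_refl _)⟩
    · rw [hFun_notmem h2]
      exact hgm (Nat.le_succ i)

lemma hFun_tendsto (hsep : ∀ n, k n + L n < k (n + 1)) (hgm : Monotone g)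
    (hgt : Tendsto g atTop atTop) : Tendsto (hFun g k L) atTop atTop := by
  rw [tendsto_atTop_atTop]
  intro b
  obtain ⟨K, hK⟩ := (tendsto_atTop_atTop.mp hgt) b
  set B := (Finset.range K).sup (fun n => k n + L n) + 1 with hB
  refine ⟨max K B, fun i hi => ?_⟩
  by_cases hx : ∃ n, inI k L n i
  · obtain ⟨n, hn⟩ := hx
    rw [hFun_mem hsep hn]
    apply hK
    have hnK : K ≤ n := by
      by_contra hlt
      push_neg at hlt
      have : k n + L n ≤ (Finset.range K).sup (fun n => k n + L n) :=
        Finset.le_sup (f := fun n => k n + L n) (Finset.mem_range.2 hlt)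
      have hiB : B ≤ i := le_trans (le_max_right K B) hi
      have hn2 := hn.2
      omega
    exact hnK.trans (kSM hsep).le_apply
  · rw [hFun_notmem hx]
    exact hK i (le_trans (le_max_left K B) hi)

end HFun
theorem stmt7 (f : ℝ → ℝ) (g : ℕ → ℕ) (hf : IsModulus f) (hfu : IsUnboundedMod f)
    (hg : InHup g) (hcard : Cardinal.mk (Quot (Rrel f g)) = 1) :
    ∃ M : ℝ, 0 < M ∧ ∃ ε : ℝ, 0 < ε ∧
      ∀ᶠ k : ℕ in atTop, f (g (k + ⌊ε * f (g k : ℝ)⌋₊) : ℝ) / f (g k : ℝ) ≤ M := by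
  by_contra hcon
  push_neg at hcon
  obtain ⟨hgm, hgt, hgn⟩ := hg
  have hfnn : ∀ m : ℕ, (0:ℝ) ≤ f m := fun m => fnonneg hf (Nat.cast_nonneg m)
  have hg1 : ∀ᶠ j : ℕ in atTop, 1 ≤ g j := hgt.eventually_ge_atTop 1
  -- Step 1: frequently, big jumps
  have hQ : ∀ n m : ℕ, ∃ K, m ≤ K ∧ 1 ≤ g K ∧
      (n:ℝ) * f (g K : ℝ) < f ((g (K + ⌊(1/(n:ℝ)) * f (g K : ℝ)⌋₊) : ℕ) : ℝ) := by
    intro n m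
    by_cases hn : n = 0
    · subst hn
      obtain ⟨K, hK1, hK2⟩ := (frequently_atTop.mp hg1.frequently) m
      refine ⟨K, hK1, hK2, ?_⟩
      have h0 : (1/(0:ℝ)) = 0 := by norm_num
      rw [Nat.cast_zero, zero_mul, h0, zero_mul, Nat.floor_zero, Nat.add_zero]
      exact fpos hf (by exact_mod_cast hK2)
    · have hnpos : (0:ℝ) < (n:ℝ) := by positivity
      have hfreq := hcon (n:ℝ) hnpos (1/(n:ℝ)) (by positivity)
      obtain ⟨K, hK1, hK2, hK3⟩ := (frequently_atTop.mp (hfreq.and_eventually hg1)) m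
      refine ⟨K, hK1, hK3, ?_⟩
      have hfgK : (0:ℝ) < f (g K : ℝ) := fpos hf (by exact_mod_cast hK3)
      exact (lt_div_iff₀ hfgK).mp hK2
  choose F hF1 hF2 hF3 using hQ
  -- Step 2: the sequence k
  have hkex : ∃ k : ℕ → ℕ,
      (∀ n, k n + ⌊(1/(n:ℝ)) * f (g (k n) : ℝ)⌋₊ < k (n+1)) ∧ (∀ n, 1 ≤ g (k n)) ∧
      (∀ n : ℕ, (n:ℝ) * f (g (k n) : ℝ) < f ((g (k n + ⌊(1/(n:ℝ)) * f (g (k n) : ℝ)⌋₊) : ℕ) : ℝ)) := by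
    refine ⟨fun n => Nat.rec (F 0 0)
      (fun n kn => F (n+1) (kn + ⌊(1/(n:ℝ)) * f (g kn : ℝ)⌋₊ + 1)) n, ?_, ?_, ?_⟩
    · intro n
      exact lt_of_lt_of_le (Nat.lt_succ_self _) (hF1 (n+1) _)
    · intro n
      cases n with
      | zero => exact hF2 0 0
      | succ n => exact hF2 (n+1) _
    · intro n
      cases n with
      | zero => exact hF3 0 0
      | succ n => exact hF3 (n+1) _
  obtain ⟨k, hsep', hk1, hk3'⟩ := hkex
  set L : ℕ → ℕ := fun n => ⌊(1/(n:ℝ)) * f (g (k n) : ℝ)⌋₊ with hLdef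
  have hsep : ∀ n, k n + L n < k (n+1) := hsep'
  have hk3 : ∀ n : ℕ, (n:ℝ) * f (g (k n) : ℝ) < f ((g (k n + L n) : ℕ) : ℝ) := hk3'
  have hfgk_pos : ∀ n, (0:ℝ) < f (g (k n) : ℝ) := fun n => fpos hf (by exact_mod_cast hk1 n)
  have hLle : ∀ n, (L n : ℝ) ≤ (1/(n:ℝ)) * f (g (k n) : ℝ) := by
    intro n
    have := hfnn (g (k n))
    exact Nat.floor_le (by positivity)
  -- the function h
  set h : ℕ → ℕ := hFun g k L with hhdef
  have hmem : ∀ {n i : ℕ}, inI k L n i → h i = g (k n) := fun hn => hFun_mem hsep hn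
  have hnotmem : ∀ {i : ℕ}, (¬ ∃ n, inI k L n i) → h i = g i := fun hi => hFun_notmem hi
  have hhle : ∀ i, h i ≤ g i := hFun_le hsep hgm
  have hhmono : Monotone h := hFun_mono hsep hgm
  have hhtend : Tendsto h atTop atTop := hFun_tendsto hsep hgm hgt
  have hh1 : ∀ᶠ i : ℕ in atTop, 1 ≤ h i := hhtend.eventually_ge_atTop 1
  -- h ∈ H↑
  have hInH : InHup h := by
    refine ⟨hhmono, hhtend, fun hT => hgn ?_⟩
    apply tendsto_of_tendsto_of_tendsto_of_le_of_le' tendsto_const_nhds hT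
    · exact Eventually.of_forall fun i => by positivity
    · filter_upwards [hh1] with i hi
      have h0 : (0:ℝ) < (h i : ℝ) := by exact_mod_cast hi
      have h1 : (h i : ℝ) ≤ (g i : ℝ) := by exact_mod_cast hhle i
      exact div_le_div_of_nonneg_left (Nat.cast_nonneg i) h0 h1
  -- Z_g(f) = Z_h(f)
  have hZ : ZgfN f g = ZgfN f h := by
    ext C
    simp only [ZgfN, Set.mem_setOf_eq]
    constructor
    · -- hard direction
      intro hC
      rw [Metric.tendsto_atTop]
      intro δ hδ
      rw [Metric.tendsto_atTop] at hC
      obtain ⟨N₁, hN₁⟩ := hC δ hδ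
      -- along the sequence k
      have hCk : Tendsto (fun n => f ((cnt C (k n) : ℕ) : ℝ) / f (g (k n) : ℝ)) atTop (nhds 0) := by
        rw [Metric.tendsto_atTop]
        intro ε hε
        obtain ⟨N, hN⟩ := hC ε hε
        exact ⟨N, fun n hn => hN (k n) (hn.trans (kSM hsep).le_apply)⟩
      rw [Metric.tendsto_atTop] at hCk
      obtain ⟨N₂a, hN₂a⟩ := hCk (δ/2) (by linarith)
      obtain ⟨N₂b, hN₂b⟩ := Metric.tendsto_atTop.mp
        (tendsto_const_div_atTop_nhds_zero_nat (f 1)) (δ/2) (by linarith)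
      set N₂ : ℕ := max (max N₂a N₂b) 1 with hN₂def
      set B : ℕ := (Finset.range N₂).sup (fun n => k n + L n) + 1 with hBdef
      refine ⟨max N₁ B, fun i hi => ?_⟩
      by_cases hx : ∃ n, inI k L n i
      · obtain ⟨n, hn⟩ := hx
        rw [hmem hn]
        have hnN₂ : N₂ ≤ n := by
          by_contra hlt
          push_neg at hlt
          have h1 : k n + L n ≤ (Finset.range N₂).sup (fun n => k n + L n) :=
            Finset.le_sup (f := fun n => k n + L n) (Finset.mem_range.2 hlt)
          have h2 : B ≤ i := le_trans (le_max_right N₁ B) hi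
          have h3 := hn.2
          omega
        have hfg := hfgk_pos n
        have hratio_nn : (0:ℝ) ≤ f ((cnt C i : ℕ) : ℝ) / f (g (k n) : ℝ) :=
          div_nonneg (hfnn _) hfg.le
        rw [Real.dist_eq, sub_zero, abs_of_nonneg hratio_nn]
        -- numerator bound
        have hcnt : cnt C i ≤ cnt C (k n) + L n := by
          have := cnt_le_add C (k n) i
          have h2 := hn.2
          omega
        have hnum : f ((cnt C i : ℕ) : ℝ) ≤ f ((cnt C (k n) : ℕ) : ℝ) + f ((L n : ℕ) : ℝ) := by
          calc f ((cnt C i : ℕ) : ℝ) ≤ f (((cnt C (k n) + L n : ℕ)) : ℝ) :=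
                fmono hf (Nat.cast_nonneg _) (by exact_mod_cast hcnt)
            _ ≤ f ((cnt C (k n) : ℕ) : ℝ) + f ((L n : ℕ) : ℝ) := by
                push_cast
                exact hf.2.2.1 _ _ (Nat.cast_nonneg _) (Nat.cast_nonneg _)
        have hfL : f ((L n : ℕ) : ℝ) ≤ (1/(n:ℝ)) * f (g (k n) : ℝ) * f 1 := by
          calc f ((L n : ℕ) : ℝ) ≤ (L n : ℝ) * f 1 := fnat hf (L n)
            _ ≤ (1/(n:ℝ)) * f (g (k n) : ℝ) * f 1 := by
                have := hLle n
                have hf1 : (0:ℝ) ≤ f 1 := fnonneg hf zero_le_one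
                nlinarith
        have hsplit : f ((cnt C i : ℕ) : ℝ) / f (g (k n) : ℝ) ≤
            f ((cnt C (k n) : ℕ) : ℝ) / f (g (k n) : ℝ) + (1/(n:ℝ)) * f 1 := by
          have step1 : f ((cnt C i : ℕ) : ℝ) / f (g (k n) : ℝ) ≤
              (f ((cnt C (k n) : ℕ) : ℝ) + f ((L n : ℕ) : ℝ)) / f (g (k n) : ℝ) := by
            gcongr
          have step2 : (f ((cnt C (k n) : ℕ) : ℝ) + f ((L n : ℕ) : ℝ)) / f (g (k n) : ℝ) =
              f ((cnt C (k n) : ℕ) : ℝ) / f (g (k n) : ℝ) + f ((L n : ℕ) : ℝ) / f (g (k n) : ℝ) :=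
            add_div _ _ _
          have step3 : f ((L n : ℕ) : ℝ) / f (g (k n) : ℝ) ≤ (1/(n:ℝ)) * f 1 := by
            rw [div_le_iff₀ hfg]
            calc f ((L n : ℕ) : ℝ) ≤ (1/(n:ℝ)) * f (g (k n) : ℝ) * f 1 := hfL
              _ = (1/(n:ℝ)) * f 1 * f (g (k n) : ℝ) := by ring
          linarith
        -- the two small terms
        have hterm1 : f ((cnt C (k n) : ℕ) : ℝ) / f (g (k n) : ℝ) < δ/2 := by
          have := hN₂a n (le_trans (le_trans (le_max_left _ _) (le_max_left _ _)) hnN₂)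
          rw [Real.dist_eq, sub_zero] at this
          exact lt_of_abs_lt this
        have hterm2 : (1/(n:ℝ)) * f 1 < δ/2 := by
          have h2 := hN₂b n (le_trans (le_trans (le_max_right _ _) (le_max_left _ _)) hnN₂)
          rw [Real.dist_eq, sub_zero] at h2
          have h3 : f 1 / (n:ℝ) < δ/2 := lt_of_abs_lt h2
          calc (1/(n:ℝ)) * f 1 = f 1 / (n:ℝ) := by ring
            _ < δ/2 := h3
        linarith
      · rw [hnotmem hx]
        exact hN₁ i (le_trans (le_max_left N₁ B) hi)
    · -- easy direction
      intro hC
      apply tendsto_of_tendsto_of_tendsto_of_le_of_le' tendsto_const_nhds hC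
      · exact Eventually.of_forall fun i => div_nonneg (hfnn _) (hfnn _)
      · filter_upwards [hh1] with i hi
        have h0 : (0:ℝ) < f (h i : ℝ) := fpos hf (by exact_mod_cast hi)
        have h1 : f (h i : ℝ) ≤ f (g i : ℝ) :=
          fmono hf (Nat.cast_nonneg _) (by exact_mod_cast hhle i)
        exact div_le_div_of_nonneg_left (hfnn _) h0 h1
  -- the two carrier elements
  have hgInH : InHup g := ⟨hgm, hgt, hgn⟩
  set aG : SfgCarrier f g := ⟨g, hgInH, rfl⟩ with haG
  set aH : SfgCarrier f g := ⟨h, hInH, hZ⟩ with haH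
  -- Rrel is an equivalence
  have hEquiv : Equivalence (Rrel f g) := by
    have bdd : ∀ (a b c : SfgCarrier f g),
        IsBoundedUnder (· ≤ ·) atTop (fun i => f (a.1 i : ℝ) / f (b.1 i : ℝ)) →
        IsBoundedUnder (· ≤ ·) atTop (fun i => f (b.1 i : ℝ) / f (c.1 i : ℝ)) →
        IsBoundedUnder (· ≤ ·) atTop (fun i => f (a.1 i : ℝ) / f (c.1 i : ℝ)) := by
      intro a b c ⟨M1, h1⟩ ⟨M2, h2⟩
      rw [eventually_map] at h1 h2
      refine ⟨M1 * M2, ?_⟩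
      rw [eventually_map]
      have hb1 : ∀ᶠ i : ℕ in atTop, 1 ≤ b.1 i := b.2.1.2.1.eventually_ge_atTop 1
      filter_upwards [h1, h2, hb1] with i hi1 hi2 hib
      have hfb : f (b.1 i : ℝ) ≠ 0 := (fpos hf (by exact_mod_cast hib)).ne'
      have e1 : (0:ℝ) ≤ f (a.1 i : ℝ) / f (b.1 i : ℝ) := div_nonneg (hfnn _) (hfnn _)
      have e2 : (0:ℝ) ≤ f (b.1 i : ℝ) / f (c.1 i : ℝ) := div_nonneg (hfnn _) (hfnn _)
      calc f (a.1 i : ℝ) / f (c.1 i : ℝ)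
          = (f (a.1 i : ℝ) / f (b.1 i : ℝ)) * (f (b.1 i : ℝ) / f (c.1 i : ℝ)) :=
            (div_mul_div_cancel₀ hfb).symm
        _ ≤ M1 * M2 := mul_le_mul hi1 hi2 e2 (e1.trans hi1)
    refine ⟨fun a => ?_, fun {a b} hab => ⟨hab.2, hab.1⟩,
      fun {a b c} hab hbc => ⟨bdd a b c hab.1 hbc.1, bdd c b a hbc.2 hab.2⟩⟩
    have ha1 : ∀ᶠ i : ℕ in atTop, 1 ≤ a.1 i := a.2.1.2.1.eventually_ge_atTop 1
    have : IsBoundedUnder (· ≤ ·) atTop (fun i => f (a.1 i : ℝ) / f (a.1 i : ℝ)) := by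
      refine ⟨1, ?_⟩
      rw [eventually_map]
      filter_upwards [ha1] with i hi
      rw [div_self (fpos hf (by exact_mod_cast hi)).ne']
    exact ⟨this, this⟩
  -- from |S_f(g)| = 1 extract Rrel aG aH
  have hsub : Subsingleton (Quot (Rrel f g)) := (Cardinal.eq_one_iff_unique.mp hcard).1
  have heq : Quot.mk (Rrel f g) aG = Quot.mk (Rrel f g) aH := Subsingleton.elim _ _
  have hR : Rrel f g aG aH := (hEquiv.eqvGen_iff).mp (Quot.eq.mp heq)
  obtain ⟨b, hb⟩ := hR.1
  rw [eventually_map] at hb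
  obtain ⟨N, hN⟩ := eventually_atTop.mp hb
  -- the contradiction
  set n : ℕ := max N (⌈b⌉₊ + 1) with hndef
  set j : ℕ := k n + L n with hjdef
  have hjmem : inI k L n j := ⟨Nat.le_add_right _ _, le_refl _⟩
  have hjN : N ≤ j := by
    have h1 : N ≤ n := le_max_left _ _
    have h2 : n ≤ k n := (kSM hsep).le_apply
    omega
  have hhj : h j = g (k n) := hmem hjmem
  have hbnd : f ((g j : ℕ) : ℝ) / f ((h j : ℕ) : ℝ) ≤ b := hN j hjN
  rw [hhj] at hbnd
  have hrat : (n:ℝ) < f (g j : ℝ) / f (g (k n) : ℝ) := by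
    rw [lt_div_iff₀ (hfgk_pos n)]
    calc (n:ℝ) * f (g (k n) : ℝ) < f ((g (k n + L n) : ℕ) : ℝ) := hk3 n
      _ = f (g j : ℝ) := rfl
  have hbn : b < (n:ℝ) := by
    have h1 : b ≤ (⌈b⌉₊ : ℝ) := Nat.le_ceil b
    have h2 : (⌈b⌉₊ + 1 : ℕ) ≤ n := le_max_right _ _
    have h3 : ((⌈b⌉₊ + 1 : ℕ) : ℝ) ≤ (n : ℝ) := Nat.cast_le.mpr h2
    push_cast at h3
    linarith
  linarith
end
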